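/- Let O ⊂ (0,1] be open with connected components (intervals) having centers x_k and radii c_k (with the component containing 1, if any, treated as an interval (x₀−c₀, x₀+c₀) ∩ (0,1]). Then the measure μ(dt) = (1/2)·1_{[0,1]∖O}(t) dt + Σ_k c_k δ_{x_k}(dt), extended to a probability measure on [0,1] ∪ {∞} by placing remaining mass at ∞, satisfies ∫_{[0,t]} s dμ(s) = μ([0,t])² for all t ∈ [0,1]. -/

import Mathlib

open MeasureTheory Set Function
open scoped ENNReal

/-!
Let `t ∈ [0,1]` lie in no component. Then `[0,t]` is the disjoint union of `[0,t] \ O` and the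
components `(x - c, x + c)` with `x ≤ t`. Such a component has length `2c` and first moment `2cx`,
twice the mass and moment of its atom, so `μ([0,t]) = t/2` and `∫_{[0,t]} s dμ = t²/4`.
If `t` lies in the component `(a, a + 2c)` with centre `x = a + c`, then `μ` has no mass in `(a, t]`
except possibly the atom at `x`, and `a` lies in no component, so both sides change from their
values at `a` by `c` resp. `cx`; the identity survives because `(a/2 + c)² = a²/4 + cx`.
-/

lemma setLIntegral_diff_iUnion_add_tsum {α ι : Type*} [MeasurableSpace α] [Countable ι]
    {μ : Measure α} (f : α → ℝ≥0∞) {A : Set α} {s : ι → Set α} (hA : MeasurableSet A)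
    (hs : ∀ i, MeasurableSet (s i)) (hd : Pairwise (Disjoint on s)) :
    ∫⁻ a in A \ ⋃ i, s i, f a ∂μ + ∑' i, ∫⁻ a in A ∩ s i, f a ∂μ = ∫⁻ a in A, f a ∂μ := by
  rw [← lintegral_iUnion (fun i => hA.inter (hs i))
      (hd.mono fun _ _ h => h.mono inter_subset_right inter_subset_right),
    ← inter_iUnion, add_comm, lintegral_inter_add_sdiff _ _ (MeasurableSet.iUnion hs)]

lemma setLIntegral_Ioc_ofReal {a b : ℝ} (ha : 0 ≤ a) (hab : a ≤ b) :
    ∫⁻ s in Ioc a b, ENNReal.ofReal s = ENNReal.ofReal ((b ^ 2 - a ^ 2) / 2) := by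
  rw [← ofReal_integral_eq_lintegral_ofReal, ← intervalIntegral.integral_of_le hab, integral_id]
  · exact continuous_id.integrableOn_Ioc
  · filter_upwards [ae_restrict_mem measurableSet_Ioc] with s hs using ha.trans hs.1.le

lemma volume_Ioo_sub_add (x c : ℝ) :
    volume (Ioo (x - c) (x + c)) = 2 * ENNReal.ofReal c := by
  rw [Real.volume_Ioo, show x + c - (x - c) = 2 * c by ring, ENNReal.ofReal_mul zero_le_two,
    ENNReal.ofReal_ofNat]

lemma setLIntegral_Ioo_sub_add_ofReal {x c : ℝ} (hxc : 0 ≤ x - c) :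
    ∫⁻ s in Ioo (x - c) (x + c), ENNReal.ofReal s = 2 * ENNReal.ofReal c * ENNReal.ofReal x := by
  rcases le_or_gt c 0 with hc | hc
  · simp [Ioo_eq_empty (show ¬ x - c < x + c by linarith), ENNReal.ofReal_of_nonpos hc]
  · rw [setLIntegral_congr Ioo_ae_eq_Ioc, setLIntegral_Ioc_ofReal hxc (by linarith),
      ← ENNReal.ofReal_ofNat 2, ← ENNReal.ofReal_mul zero_le_two,
      ← ENNReal.ofReal_mul (by positivity)]
    congr 1
    ring

lemma Icc_inter_Ioo_inter_Ioc_of_notMem {x c t : ℝ} (hxc : 0 ≤ x - c) (ht1 : t ≤ 1)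
    (ht : t ∉ Ioo (x - c) (x + c)) :
    Icc 0 t ∩ (Ioo (x - c) (x + c) ∩ Ioc 0 1) = if x ≤ t then Ioo (x - c) (x + c) else ∅ := by
  rw [mem_Ioo, not_and_or, not_lt, not_lt] at ht
  ext y
  split_ifs with hx
  · simp only [mem_inter_iff, mem_Icc, mem_Ioo, mem_Ioc]
    constructor
    · exact fun h => h.2.1
    · intro hy
      have : x + c ≤ t := by rcases ht with h | h <;> linarith [hy.1, hy.2]
      exact ⟨⟨by linarith [hy.1], by linarith [hy.2]⟩, hy, by linarith [hy.1], by linarith [hy.2]⟩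
  · simp only [mem_inter_iff, mem_Icc, mem_Ioo, mem_Ioc, mem_empty_iff_false, iff_false]
    rintro ⟨⟨-, hyt⟩, ⟨hy1, hy2⟩, -⟩
    rcases ht with h | h <;> linarith

section
variable (x c : ℕ → ℝ)

def component (k : ℕ) : Set ℝ := Ioo (x k - c k) (x k + c k) ∩ Ioc 0 1

noncomputable def centerMeasure : Measure ℝ≥0∞ :=
  (2:ℝ≥0∞)⁻¹ • Measure.map ENNReal.ofReal (volume.restrict (Icc (0:ℝ) 1 \ ⋃ k, component x c k))
    + Measure.sum (fun k =>
        (if x k ≤ 1 then ENNReal.ofReal (c k) else 0) • Measure.dirac (ENNReal.ofReal (x k)))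

/-- For `g = h ∘ ENNReal.ofReal` this is `∫_{[0, t]} h d(centerMeasure x c)`, written on `ℝ`. -/
noncomputable def truncatedIntegral (g : ℝ → ℝ≥0∞) (t : ℝ) : ℝ≥0∞ :=
  2⁻¹ * (∫⁻ s in Icc 0 t \ ⋃ k, component x c k, g s)
    + ∑' k, (if x k ≤ t then ENNReal.ofReal (c k) else 0) * g (x k)

variable {x c}

lemma measurableSet_component (k : ℕ) : MeasurableSet (component x c k) :=
  measurableSet_Ioo.inter measurableSet_Ioc

lemma truncatedIntegral_of_forall_notMem (hxc : ∀ k, 0 ≤ x k - c k)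
    (hdisj : Pairwise (Disjoint on component x c))
    {g : ℝ → ℝ≥0∞} {t : ℝ} (ht1 : t ≤ 1) (ht : ∀ k, t ∉ Ioo (x k - c k) (x k + c k))
    (hg : ∀ k, ∫⁻ s in Ioo (x k - c k) (x k + c k), g s = 2 * ENNReal.ofReal (c k) * g (x k)) :
    truncatedIntegral x c g t = 2⁻¹ * ∫⁻ s in Icc 0 t, g s := by
  have hpiece : ∀ k, ∫⁻ s in Icc 0 t ∩ component x c k, g s
      = 2 * ((if x k ≤ t then ENNReal.ofReal (c k) else 0) * g (x k)) := by
    intro k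
    rw [component, Icc_inter_Ioo_inter_Ioc_of_notMem (hxc k) ht1 (ht k)]
    split_ifs
    · rw [hg k, mul_assoc]
    · simp
  rw [← setLIntegral_diff_iUnion_add_tsum g measurableSet_Icc measurableSet_component hdisj,
    truncatedIntegral]
  simp_rw [hpiece]
  rw [ENNReal.tsum_mul_left, mul_add, ENNReal.inv_mul_cancel_left two_ne_zero ENNReal.ofNat_ne_top]

lemma truncatedIntegral_one_ofReal_of_forall_notMem (hxc : ∀ k, 0 ≤ x k - c k)
    (hdisj : Pairwise (Disjoint on component x c)) {t : ℝ} (ht0 : 0 ≤ t) (ht1 : t ≤ 1)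
    (ht : ∀ k, t ∉ Ioo (x k - c k) (x k + c k)) :
    truncatedIntegral x c 1 t = ENNReal.ofReal (t / 2) ∧
      truncatedIntegral x c ENNReal.ofReal t = ENNReal.ofReal ((t / 2) ^ 2) := by
  have half : ∀ r : ℝ, 2⁻¹ * ENNReal.ofReal r = ENNReal.ofReal (r / 2) := fun r => by
    rw [ENNReal.ofReal_div_of_pos two_pos, ENNReal.ofReal_ofNat, ENNReal.div_eq_inv_mul, mul_comm]
  constructor
  · rw [truncatedIntegral_of_forall_notMem hxc hdisj ht1 ht
      (fun k => by simp only [Pi.one_apply, setLIntegral_one, volume_Ioo_sub_add, mul_one]),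
      Pi.one_def, setLIntegral_one, Real.volume_Icc, sub_zero, half]
  · rw [truncatedIntegral_of_forall_notMem hxc hdisj ht1 ht
      (fun k => setLIntegral_Ioo_sub_add_ofReal (hxc k)),
      ← setLIntegral_congr Ioc_ae_eq_Icc, setLIntegral_Ioc_ofReal le_rfl ht0, half]
    congr 1
    ring

lemma sub_notMem_Ioo_of_mem (hxc : ∀ k, 0 ≤ x k - c k)
    (hdisj : Pairwise (Disjoint on component x c)) {K : ℕ} {t : ℝ}
    (htK : t ∈ Ioo (x K - c K) (x K + c K)) (ht1 : t ≤ 1) (k : ℕ) :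
    x K - c K ∉ Ioo (x k - c k) (x k + c k) := by
  intro hk
  obtain ⟨y, hyK, hy⟩ := exists_between (lt_min htK.1 hk.2)
  have hyt : y < t := hy.trans_le (min_le_left _ _)
  have hyk : y < x k + c k := hy.trans_le (min_le_right _ _)
  rcases eq_or_ne k K with rfl | hne
  · exact lt_irrefl _ hk.1
  · exact disjoint_left.1 (hdisj hne)
      ⟨⟨hk.1.trans hyK, hyk⟩, (hxc K).trans_lt hyK, hyt.le.trans ht1⟩
      ⟨⟨hyK, hyt.trans htK.2⟩, (hxc K).trans_lt hyK, hyt.le.trans ht1⟩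

lemma truncatedIntegral_of_mem (hxc : ∀ k, 0 ≤ x k - c k)
    (hdisj : Pairwise (Disjoint on component x c)) (g : ℝ → ℝ≥0∞) {K : ℕ} {t : ℝ}
    (htK : t ∈ Ioo (x K - c K) (x K + c K)) (ht1 : t ≤ 1) :
    truncatedIntegral x c g t = truncatedIntegral x c g (x K - c K)
      + (if x K ≤ t then ENNReal.ofReal (c K) else 0) * g (x K) := by
  obtain ⟨haK, hbK⟩ := htK
  have hK : ∀ y, x K - c K < y → y ≤ t → y ∈ component x c K := fun y hy hyt =>
    ⟨⟨hy, hyt.trans_lt hbK⟩, (hxc K).trans_lt hy, hyt.trans ht1⟩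
  have hset : Icc 0 t \ ⋃ k, component x c k = Icc 0 (x K - c K) \ ⋃ k, component x c k := by
    ext y
    simp only [mem_sdiff, mem_Icc]
    constructor
    · rintro ⟨⟨hy0, hyt⟩, hyO⟩
      exact ⟨⟨hy0, not_lt.1 fun hy => hyO (mem_iUnion.2 ⟨K, hK y hy hyt⟩)⟩, hyO⟩
    · rintro ⟨⟨hy0, hya⟩, hyO⟩
      exact ⟨⟨hy0, hya.trans haK.le⟩, hyO⟩
  have hterm : ∀ k, (if x k ≤ t then ENNReal.ofReal (c k) else 0) * g (x k)
      = (if x k ≤ x K - c K then ENNReal.ofReal (c k) else 0) * g (x k)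
        + if k = K then (if x K ≤ t then ENNReal.ofReal (c K) else 0) * g (x K) else 0 := by
    intro k
    -- an atom in `(x K - c K, t]` other than `x K` would lie in two components
    rcases eq_or_ne k K with rfl | hk
    · have : ¬ x k ≤ x k - c k := by linarith
      simp [this]
    rcases le_or_gt (c k) 0 with hc | hc
    · simp [ENNReal.ofReal_of_nonpos hc, hk]
    have hiff : x k ≤ t ↔ x k ≤ x K - c K := by
      refine ⟨fun hxt => not_lt.1 fun hxa => ?_, fun hxa => hxa.trans haK.le⟩
      exact disjoint_left.1 (hdisj hk)
        ⟨⟨by linarith, by linarith⟩, (hxc k).trans_lt (by linarith), hxt.trans ht1⟩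
        (hK (x k) hxa hxt)
    simp [hiff, hk]
  rw [truncatedIntegral, truncatedIntegral, hset, tsum_congr hterm, ENNReal.tsum_add, tsum_ite_eq,
    add_assoc]

lemma exists_truncatedIntegral_eq_ofReal (hxc : ∀ k, 0 ≤ x k - c k)
    (hdisj : Pairwise (Disjoint on component x c)) {t : ℝ} (ht0 : 0 ≤ t) (ht1 : t ≤ 1) :
    ∃ m : ℝ, 0 ≤ m ∧ m ≤ t ∧ truncatedIntegral x c 1 t = ENNReal.ofReal m ∧
      truncatedIntegral x c ENNReal.ofReal t = ENNReal.ofReal (m ^ 2) := by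
  by_cases hmem : ∃ K, t ∈ Ioo (x K - c K) (x K + c K)
  · obtain ⟨K, htK⟩ := hmem
    have hcK : 0 < c K := by linarith [htK.1, htK.2]
    obtain ⟨hmass, hmoment⟩ := truncatedIntegral_one_ofReal_of_forall_notMem hxc hdisj (hxc K)
      (htK.1.le.trans ht1) (sub_notMem_Ioo_of_mem hxc hdisj htK ht1)
    rw [truncatedIntegral_of_mem hxc hdisj _ htK ht1, truncatedIntegral_of_mem hxc hdisj _ htK ht1,
      hmass, hmoment]
    split_ifs with hxt
    · refine ⟨(x K - c K) / 2 + c K, by linarith [hxc K], by linarith [hxc K], ?_, ?_⟩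
      · rw [Pi.one_apply, mul_one, ENNReal.ofReal_add (by linarith [hxc K]) hcK.le]
      · rw [← ENNReal.ofReal_mul hcK.le,
          ← ENNReal.ofReal_add (by positivity) (by nlinarith [hxc K])]
        congr 1
        ring
    · exact ⟨(x K - c K) / 2, by linarith [hxc K], by linarith [htK.1], by simp, by simp⟩
  · push Not at hmem
    obtain ⟨hmass, hmoment⟩ := truncatedIntegral_one_ofReal_of_forall_notMem hxc hdisj ht0 ht1 hmem
    exact ⟨t / 2, by linarith, by linarith, hmass, hmoment⟩

lemma lintegral_centerMeasure {g : ℝ≥0∞ → ℝ≥0∞} (hg : Measurable g) :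
    ∫⁻ s, g s ∂centerMeasure x c
      = 2⁻¹ * (∫⁻ s in Icc 0 1 \ ⋃ k, component x c k, g (ENNReal.ofReal s))
        + ∑' k, (if x k ≤ 1 then ENNReal.ofReal (c k) else 0) * g (ENNReal.ofReal (x k)) := by
  simp only [centerMeasure, lintegral_add_measure, lintegral_smul_measure,
    lintegral_map hg ENNReal.measurable_ofReal, lintegral_sum_measure, lintegral_dirac, smul_eq_mul]

lemma centerMeasure_univ : centerMeasure x c univ = truncatedIntegral x c 1 1 := by
  rw [← lintegral_one, lintegral_centerMeasure measurable_const]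
  rfl

lemma setLIntegral_centerMeasure_Icc {g : ℝ≥0∞ → ℝ≥0∞} (hg : Measurable g) {t : ℝ}
    (ht0 : 0 ≤ t) (ht1 : t ≤ 1) :
    ∫⁻ s in Icc 0 (ENNReal.ofReal t), g s ∂centerMeasure x c
      = truncatedIntegral x c (fun s => g (ENNReal.ofReal s)) t := by
  have hpre : ENNReal.ofReal ⁻¹' Icc 0 (ENNReal.ofReal t) = Iic t := by
    ext s
    simp [ENNReal.ofReal_le_ofReal_iff ht0]
  rw [← lintegral_indicator measurableSet_Icc,
    lintegral_centerMeasure (hg.indicator measurableSet_Icc)]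
  simp only [← indicator_comp_right ENNReal.ofReal (g := g), hpre]
  rw [truncatedIntegral, lintegral_indicator measurableSet_Iic,
    Measure.restrict_restrict measurableSet_Iic]
  congr 2
  · congr 2
    ext y
    simp only [mem_inter_iff, mem_Iic, mem_sdiff, mem_Icc]
    constructor
    · rintro ⟨hyt, ⟨hy0, -⟩, hyO⟩
      exact ⟨⟨hy0, hyt⟩, hyO⟩
    · rintro ⟨⟨hy0, hyt⟩, hyO⟩
      exact ⟨hyt, ⟨hy0, hyt.trans ht1⟩, hyO⟩
  · ext k
    by_cases hxt : x k ≤ t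
    · simp [hxt, hxt.trans ht1]
    · simp [hxt]

end

theorem stmt6 (x c : ℕ → ℝ) (hxc : ∀ k, 0 ≤ x k - c k)
    (hdisj : Pairwise (Function.onFun Disjoint
      (fun k => Set.Ioo (x k - c k) (x k + c k) ∩ Set.Ioc (0:ℝ) 1))) :
    let O : Set ℝ := ⋃ k, Set.Ioo (x k - c k) (x k + c k) ∩ Set.Ioc (0:ℝ) 1
    let μ₀ : Measure ℝ≥0∞ :=
      (2:ℝ≥0∞)⁻¹ • Measure.map ENNReal.ofReal (volume.restrict (Set.Icc (0:ℝ) 1 \ O))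
        + Measure.sum (fun k =>
            (if x k ≤ 1 then ENNReal.ofReal (c k) else 0) • Measure.dirac (ENNReal.ofReal (x k)))
    let μ : Measure ℝ≥0∞ := μ₀ + (1 - μ₀ Set.univ) • Measure.dirac ⊤
    μ₀ Set.univ ≤ 1 ∧ IsProbabilityMeasure μ ∧
      ∀ t ∈ Set.Icc (0:ℝ) 1,
        ∫⁻ s in Set.Icc 0 (ENNReal.ofReal t), s ∂μ
          = (μ (Set.Icc 0 (ENNReal.ofReal t)))^2 := by
  intro O μ₀ μ
  have hμ₀ : μ₀ = centerMeasure x c := rfl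
  have hmass : μ₀ univ ≤ 1 := by
    obtain ⟨m, -, hm1, hm, -⟩ := exists_truncatedIntegral_eq_ofReal hxc hdisj zero_le_one le_rfl
    rw [hμ₀, centerMeasure_univ, hm]
    exact ENNReal.ofReal_le_one.2 hm1
  refine ⟨hmass, ⟨?_⟩, fun t ⟨ht0, ht1⟩ => ?_⟩
  · simp [μ, add_tsub_cancel_of_le hmass]
  have htop : (⊤ : ℝ≥0∞) ∉ Icc 0 (ENNReal.ofReal t) := fun h =>
    ENNReal.ofReal_ne_top (top_le_iff.1 h.2)
  have hrestrict :
      μ.restrict (Icc 0 (ENNReal.ofReal t)) = μ₀.restrict (Icc 0 (ENNReal.ofReal t)) := by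
    simp [μ, Measure.restrict_add, restrict_dirac, htop]
  obtain ⟨m, hm0, -, hm, hm2⟩ := exists_truncatedIntegral_eq_ofReal hxc hdisj ht0 ht1
  rw [← Measure.restrict_apply_self, hrestrict, Measure.restrict_apply_self, ← setLIntegral_one,
    hμ₀, setLIntegral_centerMeasure_Icc measurable_const ht0 ht1,
    setLIntegral_centerMeasure_Icc measurable_id' ht0 ht1, ← Pi.one_def, hm, hm2,
    ENNReal.ofReal_pow hm0]
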